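/- arXiv:1612.07089 — 2 statements merged into one kernel-verified Lean document; each statement's English description precedes it below -/
import Mathlib

section
/- Let G be a connected weighted graph on N ≥ 2 vertices whose edge weights w_{mn} satisfy w_{mn} ≥ ε_w > 0 for every edge (m,n) of G, and let L be its weighted graph Laplacian. Then the second-smallest eigenvalue (algebraic connectivity) a(G) satisfies a(G) ≥ 2ε_w/(N-1)². -/
/-!
Along a path `m = v₀, v₁, …, v_ℓ = n` of the graph, Cauchy–Schwarz gives
`(y m - y n)² ≤ ℓ · Σᵢ (y vᵢ - y vᵢ₊₁)² ≤ (N - 1) S`, where `S` is the sum of `(y u - y v)²`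
over the edges, since a path has length at most `N - 1`. Summing over the `N(N-1)/2` pairs
bounds the denominator by `N(N-1)² S / 2`, while the numerator is at least `ε_w S`.
-/

open Finset SimpleGraph

lemma add_sq_le_succ_mul {u v S k : ℝ} (hk : 0 ≤ k) (hS : 0 ≤ S) (hv : v ^ 2 ≤ k * S) :
    (u + v) ^ 2 ≤ (k + 1) * (u ^ 2 + S) := by
  rcases hk.lt_or_eq with hk | rfl
  · nlinarith [sq_nonneg (k * u - v), mul_le_mul_of_nonneg_left hv hk.le]
  · nlinarith

section Graph

variable {V : Type*} {G : SimpleGraph V}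

noncomputable def sqDiff (y : V → ℝ) : Sym2 V → ℝ :=
  Sym2.lift ⟨fun a b => (y a - y b) ^ 2, fun _ _ => by ring⟩

@[simp]
lemma sqDiff_mk (y : V → ℝ) (a b : V) : sqDiff y s(a, b) = (y a - y b) ^ 2 := rfl

lemma sqDiff_nonneg (y : V → ℝ) (e : Sym2 V) : 0 ≤ sqDiff y e := by
  induction e using Sym2.ind with
  | _ a b => exact sq_nonneg _

lemma SimpleGraph.Walk.sq_sub_le_length_mul_sum_sqDiff (y : V → ℝ) {a b : V}
    (p : G.Walk a b) : (y a - y b) ^ 2 ≤ p.length * (p.edges.map (sqDiff y)).sum := by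
  induction p with
  | nil => simp
  | @cons a c b _ q ih =>
    have hS : 0 ≤ (q.edges.map (sqDiff y)).sum :=
      List.sum_nonneg fun x hx => by
        obtain ⟨e, -, rfl⟩ := List.mem_map.mp hx
        exact sqDiff_nonneg y e
    have := add_sq_le_succ_mul (u := y a - y c) (q.length.cast_nonneg) hS ih
    simpa [add_comm] using this

lemma SimpleGraph.Connected.sq_sub_le_mul_sum_sqDiff [Fintype V] [Fintype G.edgeSet]
    (hG : G.Connected) (y : V → ℝ) (a b : V) :
    (y a - y b) ^ 2 ≤ ((Fintype.card V : ℝ) - 1) * ∑ e ∈ G.edgeFinset, sqDiff y e := by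
  classical
  obtain ⟨p, hp⟩ := (hG.preconnected a b).some.toPath
  have hlen : (p.length : ℝ) ≤ (Fintype.card V : ℝ) - 1 := by
    have := hp.length_lt
    rw [le_sub_iff_add_le]
    exact_mod_cast this
  have hsub : p.edges.toFinset ⊆ G.edgeFinset := fun e he => by
    simpa using p.edges_subset_edgeSet (List.mem_toFinset.mp he)
  calc (y a - y b) ^ 2 ≤ p.length * (p.edges.map (sqDiff y)).sum :=
        p.sq_sub_le_length_mul_sum_sqDiff y
    _ = p.length * ∑ e ∈ p.edges.toFinset, sqDiff y e := by
        rw [List.sum_toFinset _ hp.edges_nodup]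
    _ ≤ ((Fintype.card V : ℝ) - 1) * ∑ e ∈ G.edgeFinset, sqDiff y e := by
        refine mul_le_mul hlen ?_ (sum_nonneg fun e _ => sqDiff_nonneg y e)
          (p.length.cast_nonneg.trans hlen)
        exact sum_le_sum_of_subset_of_nonneg hsub fun e _ _ => sqDiff_nonneg y e

lemma SimpleGraph.sum_edgeFinset_eq_sum_filter_lt [Fintype V] [LinearOrder V]
    [Fintype G.edgeSet] [DecidableRel G.Adj] {M : Type*} [AddCommMonoid M] (f : Sym2 V → M) :
    ∑ e ∈ G.edgeFinset, f e =
      ∑ p ∈ univ.filter (fun p : V × V => p.1 < p.2),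
        if G.Adj p.1 p.2 then f s(p.1, p.2) else 0 := by
  classical
  have hedge : G.edgeFinset = {e ∈ (univ : Finset V).sym2 | ¬e.IsDiag ∧ e ∈ G.edgeSet} := by
    ext e
    simpa using fun he : e ∈ G.edgeSet => G.not_isDiag_of_mem_edgeSet he
  rw [hedge, ← filter_filter, sum_filter, sum_sym2_filter_not_isDiag]
  refine sum_congr ?_ fun p _ => if_congr (mem_edgeSet G) rfl rfl
  ext p
  simpa using ne_of_lt

lemma SimpleGraph.mul_sum_edgeFinset_le_sum_filter_lt [Fintype V] [LinearOrder V]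
    [Fintype G.edgeSet] [DecidableRel G.Adj] {w : V → V → ℝ} {ε : ℝ}
    (hw : ∀ m n, 0 ≤ w m n) (hadj : ∀ m n, G.Adj m n → ε ≤ w m n)
    {g : Sym2 V → ℝ} (hg : ∀ e, 0 ≤ g e) :
    ε * ∑ e ∈ G.edgeFinset, g e ≤
      ∑ p ∈ univ.filter (fun p : V × V => p.1 < p.2), w p.1 p.2 * g s(p.1, p.2) := by
  rw [G.sum_edgeFinset_eq_sum_filter_lt, mul_sum]
  refine sum_le_sum fun p _ => ?_
  split_ifs with h
  · exact mul_le_mul_of_nonneg_right (hadj _ _ h) (hg _)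
  · simpa using mul_nonneg (hw _ _) (hg _)

end Graph

lemma exists_apply_ne_of_sum_eq_zero {V : Type*} [Fintype V] {y : V → ℝ}
    (hy0 : ∑ m, y m = 0) (hy : y ≠ 0) : ∃ m n, y m ≠ y n := by
  obtain ⟨m, hm⟩ := Function.ne_iff.mp hy
  by_contra! hconst
  have : (Fintype.card V : ℝ) * y m = 0 := by
    simpa [fun n => hconst n m] using hy0
  have hcard : (Fintype.card V : ℝ) ≠ 0 := by
    have : Nonempty V := ⟨m⟩
    exact Nat.cast_ne_zero.mpr Fintype.card_ne_zero
  exact hm (by simpa [hcard] using this)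

lemma sum_filter_lt_sq_sub_pos {V : Type*} [Fintype V] [LinearOrder V] {y : V → ℝ}
    (hy0 : ∑ m, y m = 0) (hy : y ≠ 0) :
    0 < ∑ p ∈ univ.filter (fun p : V × V => p.1 < p.2), (y p.1 - y p.2) ^ 2 := by
  obtain ⟨m, n, hmn⟩ := exists_apply_ne_of_sum_eq_zero hy0 hy
  have hne : m ≠ n := fun h => hmn (congrArg y h)
  refine sum_pos' (fun p _ => sq_nonneg _) ⟨(min m n, max m n), ?_, ?_⟩
  · exact mem_filter.mpr ⟨mem_univ _, min_lt_max.mpr hne⟩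
  · rcases le_total m n with h | h
    · simpa [h] using sq_pos_of_ne_zero (sub_ne_zero.mpr hmn)
    · simpa [h] using sq_pos_of_ne_zero (sub_ne_zero.mpr hmn.symm)

/-- Algebraic connectivity lower bound: for a connected weighted graph on `N ≥ 2`
vertices whose edge weights are at least `εw > 0`, the variational Rayleigh quotient
defining the algebraic connectivity is at least `2 εw / (N-1)^2` for every nonzero
mean-zero vector `y`. -/
theorem stmt0 (N : ℕ) (hN : 2 ≤ N) (w : Fin N → Fin N → ℝ)
    (hsym : ∀ m n, w m n = w n m) (hnonneg : ∀ m n, 0 ≤ w m n)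
    (εw : ℝ) (hεw : 0 < εw)
    (hedge : ∀ m n, m ≠ n → 0 < w m n → εw ≤ w m n)
    (hconn : (SimpleGraph.fromRel (fun m n => 0 < w m n)).Connected)
    (y : Fin N → ℝ) (hy0 : ∑ m, y m = 0) (hy : y ≠ 0) :
    2 * εw / ((N : ℝ) - 1) ^ 2 ≤
      (N : ℝ) *
        ((∑ p ∈ Finset.univ.filter (fun p : Fin N × Fin N => p.1 < p.2),
            w p.1 p.2 * (y p.1 - y p.2) ^ 2) /
         (∑ p ∈ Finset.univ.filter (fun p : Fin N × Fin N => p.1 < p.2),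
            (y p.1 - y p.2) ^ 2)) := by
  classical
  set G := SimpleGraph.fromRel (fun m n : Fin N => 0 < w m n)
  have hadj : ∀ m n, G.Adj m n → εw ≤ w m n := by
    rintro m n ⟨hne, hw | hw⟩
    exacts [hedge m n hne hw, hedge m n hne (hsym m n ▸ hw)]
  set S := ∑ e ∈ G.edgeFinset, sqDiff y e
  have hNum : εw * S ≤ ∑ p ∈ univ.filter (fun p : Fin N × Fin N => p.1 < p.2),
      w p.1 p.2 * (y p.1 - y p.2) ^ 2 :=
    G.mul_sum_edgeFinset_le_sum_filter_lt hnonneg hadj (sqDiff_nonneg y)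
  have hDen : ∑ p ∈ univ.filter (fun p : Fin N × Fin N => p.1 < p.2), (y p.1 - y p.2) ^ 2 ≤
      (N * (N - 1) / 2 : ℝ) * ((N - 1) * S) := by
    have hpair := hconn.sq_sub_le_mul_sum_sqDiff y
    rw [Fintype.card_fin] at hpair
    calc _ ≤ #(univ.filter (fun p : Fin N × Fin N => p.1 < p.2)) • ((N - 1 : ℝ) * S) :=
          sum_le_card_nsmul _ _ _ fun p _ => hpair p.1 p.2
      _ = _ := by
          rw [Fintype.card_product_filter_lt, Fintype.card_fin, nsmul_eq_mul,
            Nat.cast_choose_two]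
  have hDen_pos := sum_filter_lt_sq_sub_pos hy0 hy
  have hN' : (2 : ℝ) ≤ N := by exact_mod_cast hN
  rw [← mul_div_assoc, div_le_div_iff₀ (by nlinarith) hDen_pos]
  have hN3 : (0 : ℝ) ≤ N * (N - 1) ^ 2 := by positivity
  nlinarith [mul_le_mul_of_nonneg_left hDen hεw.le, mul_le_mul_of_nonneg_left hNum hN3]
end

section
/- Let B̄(X) be an N×N symmetric matrix-valued function with B̄(X)_{mn} = -c·δ̄(x_m, x_n) ≤ 0 for m ≠ n (c > 0) and diagonal entries making all row sums zero, where δ̄(x_m,x_n) = E[δ_{mn}]/√(‖x_m - x_n‖² + ε). Then for all X, Y ∈ ℝ^{N×P}: tr(Xᵀ B̄(X) X) ≥ tr(Xᵀ B̄(Y) Y), that is, -tr(Xᵀ B̄(X) X) ≤ -tr(Xᵀ B̄(Y) Y). -/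
/-!
Write `B̄(Z)` as the weighted Laplacian of the symmetric weights `w_{mk} = c δ_{mk} / ‖z_m - z_k‖`.
Symmetrising the quadratic form gives `tr(Xᵀ B̄(Z) Y) = ½ ∑ w_{mk} ⟨x_m - x_k, y_m - y_k⟩`, and
the two traces are compared term by term: by Cauchy–Schwarz, `⟨a, b⟩ / ‖b‖ ≤ ‖a‖ = ⟨a, a⟩ / ‖a‖`.
-/

open Matrix Finset

/-- The matrix `B̄(Z)` with off-diagonal entries `-c δ_{mn}/‖zₘ - zₙ‖` and diagonal
entries making row sums vanish. -/
noncomputable def Bbar (N P : ℕ) (c : ℝ) (δ : Fin N → Fin N → ℝ)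
    (Z : Matrix (Fin N) (Fin P) ℝ) : Matrix (Fin N) (Fin N) ℝ :=
  Matrix.of fun m n =>
    if m = n then
      ∑ k ∈ Finset.univ.erase m, c * δ m k / Real.sqrt (∑ j, (Z m j - Z k j) ^ 2)
    else
      -(c * δ m n / Real.sqrt (∑ j, (Z m j - Z n j) ^ 2))

section WeightedLaplacian

variable {ι κ : Type*} [Fintype ι] [Fintype κ]

lemma dotProduct_div_sqrt_le (u v : κ → ℝ) : u ⬝ᵥ v / √(v ⬝ᵥ v) ≤ u ⬝ᵥ u / √(u ⬝ᵥ u) := by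
  rw [Real.div_sqrt]
  rcases (Real.sqrt_nonneg (v ⬝ᵥ v)).eq_or_lt with hv | hv
  · rw [← hv, div_zero]
    exact Real.sqrt_nonneg _
  · rw [div_le_iff₀ hv]
    simpa only [dotProduct, sq] using Real.sum_mul_le_sqrt_mul_sqrt univ u v

lemma trace_transpose_mul_mul (A : Matrix ι ι ℝ) (X Y : Matrix ι κ ℝ) :
    (Xᵀ * A * Y).trace = ∑ m, ∑ k, A m k * (X m ⬝ᵥ Y k) := by
  simp only [trace, Matrix.diag, mul_apply, transpose_apply, dotProduct, Finset.mul_sum,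
    Finset.sum_mul]
  conv_rhs => rw [Finset.sum_comm]
  rw [Finset.sum_comm]
  refine sum_congr rfl fun k _ => ?_
  rw [Finset.sum_comm]
  exact sum_congr rfl fun m _ => sum_congr rfl fun j _ => by ring

variable [DecidableEq ι]

def weightedLaplacian (w : ι → ι → ℝ) : Matrix ι ι ℝ :=
  diagonal (fun m => ∑ k, w m k) - of w

lemma trace_transpose_mul_weightedLaplacian_mul {w : ι → ι → ℝ} (hw : ∀ m k, w m k = w k m)
    (X Y : Matrix ι κ ℝ) :
    (Xᵀ * weightedLaplacian w * Y).trace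
      = (∑ m, ∑ k, w m k * ((X m - X k) ⬝ᵥ (Y m - Y k))) / 2 := by
  have hdiag : ∑ m, ∑ k, w m k * (X k ⬝ᵥ Y k) = ∑ m, ∑ k, w m k * (X m ⬝ᵥ Y m) := by
    rw [Finset.sum_comm]
    exact sum_congr rfl fun m _ => sum_congr rfl fun k _ => by rw [hw]
  have hcross : ∑ m, ∑ k, w m k * (X k ⬝ᵥ Y m) = ∑ m, ∑ k, w m k * (X m ⬝ᵥ Y k) := by
    rw [Finset.sum_comm]
    exact sum_congr rfl fun m _ => sum_congr rfl fun k _ => by rw [hw]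
  simp only [trace_transpose_mul_mul, weightedLaplacian, Matrix.sub_apply, diagonal_apply,
    of_apply, sub_mul, ite_mul, zero_mul, sum_sub_distrib, sum_ite_eq, mem_univ, if_true,
    sum_mul, sub_dotProduct, dotProduct_sub, mul_sub, hdiag, hcross]
  ring

end WeightedLaplacian

section BbarWeight

variable {ι κ : Type*} [Fintype κ]

noncomputable def bbarWeight (c : ℝ) (δ : ι → ι → ℝ) (Z : Matrix ι κ ℝ) (m k : ι) : ℝ :=
  c * δ m k / √((Z m - Z k) ⬝ᵥ (Z m - Z k))

lemma bbarWeight_comm {c : ℝ} {δ : ι → ι → ℝ} (hδ : ∀ m k, δ m k = δ k m) (Z : Matrix ι κ ℝ)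
    (m k : ι) : bbarWeight c δ Z m k = bbarWeight c δ Z k m := by
  rw [bbarWeight, bbarWeight, hδ, ← neg_sub (Z m), neg_dotProduct, dotProduct_neg, neg_neg]

lemma bbarWeight_mul_dotProduct_le {c : ℝ} {δ : ι → ι → ℝ} {m k : ι} (hcδ : 0 ≤ c * δ m k)
    (X Y : Matrix ι κ ℝ) :
    bbarWeight c δ Y m k * ((X m - X k) ⬝ᵥ (Y m - Y k))
      ≤ bbarWeight c δ X m k * ((X m - X k) ⬝ᵥ (X m - X k)) := by
  unfold bbarWeight
  set u := X m - X k
  set v := Y m - Y k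
  calc c * δ m k / √(v ⬝ᵥ v) * (u ⬝ᵥ v) = c * δ m k * (u ⬝ᵥ v / √(v ⬝ᵥ v)) := by ring
    _ ≤ c * δ m k * (u ⬝ᵥ u / √(u ⬝ᵥ u)) :=
      mul_le_mul_of_nonneg_left (dotProduct_div_sqrt_le u v) hcδ
    _ = c * δ m k / √(u ⬝ᵥ u) * (u ⬝ᵥ u) := by ring

end BbarWeight

lemma Bbar_eq_weightedLaplacian (N P : ℕ) (c : ℝ) (δ : Fin N → Fin N → ℝ)
    (Z : Matrix (Fin N) (Fin P) ℝ) : Bbar N P c δ Z = weightedLaplacian (bbarWeight c δ Z) := by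
  have hsq : ∀ m k, ∑ j, (Z m j - Z k j) ^ 2 = (Z m - Z k) ⬝ᵥ (Z m - Z k) := fun m k => by
    simp only [dotProduct, Pi.sub_apply, sq]
  ext m n
  by_cases hmn : m = n
  · subst hmn
    simp [Bbar, weightedLaplacian, bbarWeight, hsq]
  · simp [Bbar, weightedLaplacian, bbarWeight, hsq, hmn]

theorem stmt18_general (N P : ℕ) (c : ℝ) (hc : 0 < c) (δ : Fin N → Fin N → ℝ)
    (hδpos : ∀ m n, m ≠ n → 0 < δ m n) (hδsym : ∀ m n, δ m n = δ n m)
    (X Y : Matrix (Fin N) (Fin P) ℝ) :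
    (Xᵀ * Bbar N P c δ Y * Y).trace ≤ (Xᵀ * Bbar N P c δ X * X).trace := by
  simp only [Bbar_eq_weightedLaplacian,
    trace_transpose_mul_weightedLaplacian_mul (bbarWeight_comm hδsym _)]
  refine div_le_div_of_nonneg_right (sum_le_sum fun m _ => sum_le_sum fun k _ => ?_) two_pos.le
  by_cases hmk : m = k
  · simp [hmk]
  · exact bbarWeight_mul_dotProduct_le (mul_pos hc (hδpos m k hmk)).le X Y

/-- Cauchy–Schwarz majorization of the cross term: for `B̄` as above (with `ε = 0` and
pairwise distinct rows), `tr(Xᵀ B̄(X) X) ≥ tr(Xᵀ B̄(Y) Y)` for all `X, Y`. -/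
theorem stmt18 (N P : ℕ) (c : ℝ) (hc : 0 < c) (δ : Fin N → Fin N → ℝ)
    (hδpos : ∀ m n, m ≠ n → 0 < δ m n) (hδsym : ∀ m n, δ m n = δ n m)
    (X Y : Matrix (Fin N) (Fin P) ℝ)
    (hX : ∀ m n, m ≠ n → (fun j => X m j) ≠ (fun j => X n j))
    (hY : ∀ m n, m ≠ n → (fun j => Y m j) ≠ (fun j => Y n j)) :
    (Xᵀ * Bbar N P c δ Y * Y).trace ≤ (Xᵀ * Bbar N P c δ X * X).trace :=
  stmt18_general N P c hc δ hδpos hδsym X Y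
end
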